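/- arXiv:1505.01523 — 3 statements merged into one kernel-verified Lean document; each statement's English description precedes it below -/
import Mathlib

section
/- All-bins concentration for simple tabulation with few bins (Theorem 1, equation (6)): for every constant c ≥ 1 and every constant γ > 0 there exists a constant C such that the following holds. Let h : Σ^c → [m] be a random simple tabulation hash function (m a power of two), and let S ⊆ Σ^c be a set of n ≥ m keys. Then with probability at least 1 − n^{−γ}, simultaneously for every bin b ∈ [m], the number of keys x ∈ S with h(x) = b lies in the interval n/m ± C·√(n/m)·(log n)^c. -/
/-!
Induction on the number `c` of characters, for a statement with an additive slack: if `N ≥ 3`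
bounds both `|S|` and the number `m` of bins, then with probability `1 - N^{-γ}` every bin
load is within `C (√(|S|/m) + 1) (log N)^c` of `|S|/m`.

For the step, group the keys by their first character `a`. By induction (with `γ + 2`, and a
union bound over at most `N` groups) the last `c` tables balance every group `S_a`, except
with probability `N^{-γ-1}`. Given that, the load of bin `b` is `∑ₐ X_a(b - h₀[a])`, a sum of
independent terms, one per group, that deviate from `|S_a|/m` by at most
`C (√(|S_a|/m) + 1) (log N)^c` and have variance `O(C² (log N)^{2c} |S_a|/m)`. Bernstein's
inequality at `(γ + 7) log N` times the scale bounds the failure probability of one bin by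
`2 N^{-γ-3}`, and a union bound over the `m ≤ N` bins completes the step. Sets of at most
two keys are balanced deterministically.
-/

open scoped Classical
open Finset

/-- Bit strings of length `n`, identified with `(𝔽₂)^n`; bitwise XOR is
coordinatewise addition in `ZMod 2`.  This models the set `[2^n]`. -/
abbrev Bits (n : ℕ) : Type := Fin n → ZMod 2

/-- Probability of an event under the uniform distribution on a finite sample space. -/
noncomputable def Pr {Ω : Type*} [Fintype Ω] (E : Ω → Prop) : ℝ :=
  ((Finset.univ.filter E).card : ℝ) / (Fintype.card Ω : ℝ)

/-- Simple tabulation hashing with `c` random character tables. -/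
def simpleTab {c : ℕ} {A R : Type*} [AddCommMonoid R] (T : Fin c → A → R) (x : Fin c → A) : R :=
  ∑ i, T i (x i)

namespace Pr

variable {Ω : Type*} [Fintype Ω]

lemma eq_card_div (E : Ω → Prop) [DecidablePred E] :
    Pr E = (#(univ.filter E) : ℝ) / Fintype.card Ω := by
  unfold Pr
  congr

lemma mono {E F : Ω → Prop} (h : ∀ ω, E ω → F ω) : Pr E ≤ Pr F := by
  unfold Pr
  gcongr with ω
  exact h ω

lemma le_one (E : Ω → Prop) : Pr E ≤ 1 := by
  unfold Pr
  exact div_le_one_of_le₀ (by exact_mod_cast card_le_univ _) (Nat.cast_nonneg _)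

lemma eq_one [Nonempty Ω] {E : Ω → Prop} (h : ∀ ω, E ω) : Pr E = 1 := by
  unfold Pr
  rw [filter_true_of_mem fun ω _ => h ω, card_univ]
  exact div_self (by exact_mod_cast Fintype.card_ne_zero)

lemma not [Nonempty Ω] (E : Ω → Prop) : Pr (fun ω => ¬ E ω) = 1 - Pr E := by
  have hΩ : (Fintype.card Ω : ℝ) ≠ 0 := by exact_mod_cast Fintype.card_ne_zero
  have hsplit := card_filter_add_card_filter_not (s := univ) E
  rw [card_univ] at hsplit
  rw [eq_card_div, eq_card_div, eq_sub_iff_add_eq, ← add_div, ← Nat.cast_add, add_comm, hsplit,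
    div_self hΩ]

lemma exists_le {ι : Type*} (A : Finset ι) (E : ι → Ω → Prop) :
    Pr (fun ω => ∃ i ∈ A, E i ω) ≤ ∑ i ∈ A, Pr (E i) := by
  simp only [eq_card_div, ← sum_div]
  gcongr
  have hsub : univ.filter (fun ω => ∃ i ∈ A, E i ω) ⊆ A.biUnion fun i => univ.filter (E i) := by
    intro ω
    simp
  exact_mod_cast (card_le_card hsub).trans card_biUnion_le

lemma or_le (E F : Ω → Prop) : Pr (fun ω => E ω ∨ F ω) ≤ Pr E + Pr F := by
  simp only [eq_card_div, ← add_div]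
  gcongr
  exact_mod_cast (card_le_card (by intro ω; simp)).trans (card_union_le _ _)

end Pr

section FinCons

variable {F : Type*} [Fintype F] {c : ℕ}

lemma card_filter_fin_cons (E : (Fin (c + 1) → F) → Prop) :
    #(univ.filter E) = ∑ w : Fin c → F, #(univ.filter fun f : F => E (Fin.cons f w)) := by
  simp only [card_filter]
  rw [← Fintype.sum_prod_type_right fun p : F × (Fin c → F) =>
    if E (Fin.cons p.1 p.2) then 1 else 0]
  exact (Fintype.sum_equiv (Fin.consEquiv fun _ => F) _ _ fun _ => rfl).symm

lemma Pr.eq_sum_fin_cons [Nonempty F] (E : (Fin (c + 1) → F) → Prop) :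
    Pr E = (∑ w : Fin c → F, Pr fun f : F => E (Fin.cons f w)) / Fintype.card (Fin c → F) := by
  simp only [Pr.eq_card_div, ← sum_div, card_filter_fin_cons E, Fintype.card_fun,
    Fintype.card_fin]
  push_cast
  rw [div_div, pow_succ']

lemma Pr.le_add_of_fin_cons [Nonempty F] (G : (Fin c → F) → Prop)
    (E : (Fin (c + 1) → F) → Prop) {p q : ℝ} (hq : 0 ≤ q) (hG : Pr (fun w => ¬ G w) ≤ p)
    (hE : ∀ w, G w → Pr (fun f : F => E (Fin.cons f w)) ≤ q) :
    Pr E ≤ p + q := by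
  have hW : (0 : ℝ) < Fintype.card (Fin c → F) := by exact_mod_cast Fintype.card_pos
  have hpointwise : ∀ w : Fin c → F,
      Pr (fun f : F => E (Fin.cons f w)) ≤ (if ¬ G w then 1 else 0) + q := by
    intro w
    by_cases hw : G w
    · simpa [hw] using hE w hw
    · simpa [hw] using (Pr.le_one _).trans (le_add_of_nonneg_right hq)
  calc Pr E
      = (∑ w : Fin c → F, Pr fun f : F => E (Fin.cons f w)) / Fintype.card (Fin c → F) :=
        Pr.eq_sum_fin_cons E
    _ ≤ (∑ w : Fin c → F, ((if ¬ G w then 1 else 0) + q)) / Fintype.card (Fin c → F) := by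
        gcongr with w; exact hpointwise w
    _ = Pr (fun w => ¬ G w) + q := by
        rw [sum_add_distrib, add_div, Pr.eq_card_div, card_filter, sum_const, card_univ,
          nsmul_eq_mul, mul_div_cancel_left₀ _ hW.ne']
        push_cast
        rfl
    _ ≤ p + q := by linarith

end FinCons

section Chernoff

open Real

variable {α β : Type*} [Fintype α] [DecidableEq α] [Fintype β]

lemma Pr.le_sum_exp_sub_div {Ω : Type*} [Fintype Ω] (X : Ω → ℝ) (u : ℝ) :
    Pr (fun ω => u ≤ X ω) ≤ (∑ ω, exp (X ω - u)) / Fintype.card Ω := by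
  rw [Pr.eq_card_div]
  gcongr
  rw [card_eq_sum_ones, Nat.cast_sum, Nat.cast_one, ← sum_filter_add_sum_filter_not univ
    (fun ω => u ≤ X ω) fun ω => exp (X ω - u)]
  refine le_add_of_le_of_nonneg (sum_le_sum fun ω hω => ?_)
    (sum_nonneg fun ω _ => (exp_pos _).le)
  exact one_le_exp (sub_nonneg.mpr (mem_filter.mp hω).2)

lemma sum_pi_prod_div [Nonempty β] (A : Finset α) (G : α → β → ℝ) :
    (∑ f : α → β, ∏ a ∈ A, G a (f a)) / Fintype.card (α → β)
      = ∏ a ∈ A, (∑ v, G a v) / Fintype.card β := by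
  have hrestrict :
      ∀ f : α → β, ∏ a ∈ A, G a (f a) = ∏ a, if a ∈ A then G a (f a) else 1 := fun f => (prod_ite_mem_eq A _).symm
  have hβ : (Fintype.card β : ℝ) ≠ 0 := by exact_mod_cast Fintype.card_ne_zero
  have hcard : (Fintype.card (α → β) : ℝ) = ∏ _a : α, (Fintype.card β : ℝ) := by
    simp
  simp only [hrestrict]
  rw [← Fintype.prod_sum fun a v => if a ∈ A then G a v else 1, hcard, ← prod_div_distrib,
    ← prod_ite_mem_eq A]
  refine prod_congr rfl fun a _ => ?_
  split_ifs
  · rfl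
  · simp [hβ]

lemma avg_exp_le_exp_avg_sq [Nonempty β] (g : β → ℝ) (hmean : ∑ v, g v = 0)
    (hbdd : ∀ v, |g v| ≤ 1) :
    (∑ v, exp (g v)) / Fintype.card β ≤ exp ((∑ v, g v ^ 2) / Fintype.card β) := by
  have hβ : (0 : ℝ) < Fintype.card β := by exact_mod_cast Fintype.card_pos
  have hquad : ∀ v, exp (g v) ≤ 1 + g v + g v ^ 2 := fun v => by
    linarith [(abs_le.mp (abs_exp_sub_one_sub_id_le (hbdd v))).2]
  calc (∑ v, exp (g v)) / Fintype.card β ≤ (∑ v, (1 + g v + g v ^ 2)) / Fintype.card β := by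
        gcongr with v; exact hquad v
    _ = 1 + (∑ v, g v ^ 2) / Fintype.card β := by
        rw [sum_add_distrib, sum_add_distrib, hmean, sum_const, card_univ, nsmul_one]
        field_simp
        ring
    _ ≤ exp ((∑ v, g v ^ 2) / Fintype.card β) := by
        linarith [add_one_le_exp ((∑ v, g v ^ 2) / Fintype.card β)]

lemma Pr.le_exp_sub_of_sum_sq_le [Nonempty β] (A : Finset α) (g : α → β → ℝ) {u V : ℝ}
    (hmean : ∀ a ∈ A, ∑ v, g a v = 0) (hbdd : ∀ a ∈ A, ∀ v, |g a v| ≤ 1)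
    (hV : ∑ a ∈ A, (∑ v, g a v ^ 2) / Fintype.card β ≤ V) :
    Pr (fun f : α → β => u ≤ ∑ a ∈ A, g a (f a)) ≤ exp (V - u) :=
  calc Pr (fun f : α → β => u ≤ ∑ a ∈ A, g a (f a))
      ≤ (∑ f : α → β, exp (∑ a ∈ A, g a (f a) - u)) / Fintype.card (α → β) :=
        Pr.le_sum_exp_sub_div _ u
    _ = exp (-u) * ((∑ f : α → β, ∏ a ∈ A, exp (g a (f a))) / Fintype.card (α → β)) := by
        rw [mul_div_assoc', mul_sum]
        exact congrArg (· / _) (sum_congr rfl fun f _ => by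
          rw [exp_sub, exp_sum, exp_neg, div_eq_inv_mul])
    _ = exp (-u) * ∏ a ∈ A, (∑ v, exp (g a v)) / Fintype.card β := by
        rw [sum_pi_prod_div A fun a v => exp (g a v)]
    _ ≤ exp (-u) * ∏ a ∈ A, exp ((∑ v, g a v ^ 2) / Fintype.card β) := by
        gcongr with a ha
        exact avg_exp_le_exp_avg_sq (g a) (hmean a ha) (hbdd a ha)
    _ ≤ exp (V - u) := by
        rw [← exp_sum, ← exp_add]
        gcongr
        linarith

lemma Pr.lt_abs_le_two_mul_exp_sub [Nonempty β] (A : Finset α) (g : α → β → ℝ) {u V : ℝ}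
    (hmean : ∀ a ∈ A, ∑ v, g a v = 0) (hbdd : ∀ a ∈ A, ∀ v, |g a v| ≤ 1)
    (hV : ∑ a ∈ A, (∑ v, g a v ^ 2) / Fintype.card β ≤ V) :
    Pr (fun f : α → β => u < |∑ a ∈ A, g a (f a)|) ≤ 2 * exp (V - u) := by
  have hupper := Pr.le_exp_sub_of_sum_sq_le A g hmean hbdd hV (u := u)
  have hlower := Pr.le_exp_sub_of_sum_sq_le A (fun a v => -g a v) (u := u)
    (fun a ha => by rw [sum_neg_distrib, hmean a ha, neg_zero])
    (fun a ha v => by rw [abs_neg]; exact hbdd a ha v) (by simpa using hV)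
  refine (Pr.mono fun f hf => ?_).trans ((Pr.or_le (fun f : α → β => u ≤ ∑ a ∈ A, g a (f a))
    fun f => u ≤ ∑ a ∈ A, -g a (f a)).trans (by linarith))
  rw [sum_neg_distrib]
  exact (lt_abs.mp hf).imp le_of_lt le_of_lt

end Chernoff

section BoundedDeviations

open Real

variable {α β : Type*} [Fintype α] [DecidableEq α] [Fintype β] [Nonempty β]

lemma sum_sq_sub_div_card_le (Y : β → ℝ) {μ B : ℝ} (hB : 1 ≤ B) (hY0 : ∀ v, 0 ≤ Y v)
    (hsum : ∑ v, Y v = Fintype.card β * μ) (hdev : ∀ v, |Y v - μ| ≤ B * (√μ + 1)) :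
    (∑ v, (Y v - μ) ^ 2) / Fintype.card β ≤ 4 * B ^ 2 * μ := by
  have hβ : (0 : ℝ) < Fintype.card β := by exact_mod_cast Fintype.card_pos
  have hμ : 0 ≤ μ := nonneg_of_mul_nonneg_right (hsum ▸ sum_nonneg fun v _ => hY0 v) hβ
  have hsqrt := sq_sqrt hμ
  rw [div_le_iff₀ hβ]
  rcases le_or_gt 1 μ with hμ1 | hμ1
  · have hroot : 1 ≤ √μ := one_le_sqrt.mpr hμ1
    have hsq : ∀ v, (Y v - μ) ^ 2 ≤ 4 * B ^ 2 * μ := fun v => by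
      have hdev' : |Y v - μ| ≤ 2 * B * √μ := (hdev v).trans (by nlinarith)
      calc (Y v - μ) ^ 2 = |Y v - μ| ^ 2 := (sq_abs _).symm
        _ ≤ (2 * B * √μ) ^ 2 := pow_le_pow_left₀ (abs_nonneg _) hdev' 2
        _ = 4 * B ^ 2 * μ := by rw [mul_pow, hsqrt]; ring
    calc ∑ v, (Y v - μ) ^ 2 ≤ ∑ _v : β, 4 * B ^ 2 * μ := sum_le_sum fun v _ => hsq v
      _ = 4 * B ^ 2 * μ * Fintype.card β := by rw [sum_const, card_univ, nsmul_eq_mul, mul_comm]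
  · have hroot : √μ ≤ 1 := sqrt_le_one.mpr hμ1.le
    have hsq : ∀ v, (Y v - μ) ^ 2 ≤ 2 * B * (Y v + μ) := fun v => by
      have hdev' : |Y v - μ| ≤ 2 * B := (hdev v).trans (by nlinarith)
      have hsum' : |Y v - μ| ≤ Y v + μ := by
        rw [abs_le]; constructor <;> linarith [hY0 v]
      rw [← sq_abs, sq]
      exact mul_le_mul hdev' hsum' (abs_nonneg _) (by linarith)
    calc ∑ v, (Y v - μ) ^ 2 ≤ ∑ v, 2 * B * (Y v + μ) := sum_le_sum fun v _ => hsq v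
      _ = 4 * B * μ * Fintype.card β := by
        rw [← mul_sum, sum_add_distrib, hsum, sum_const, card_univ, nsmul_eq_mul]; ring
      _ ≤ 4 * B ^ 2 * μ * Fintype.card β := by gcongr; nlinarith

/-- A form of Bernstein's inequality. -/
lemma Pr.lt_abs_sum_sub_le (A : Finset α) (Y : α → β → ℝ) (μ : α → ℝ) {B u : ℝ}
    (hB : 1 ≤ B) (hY0 : ∀ a ∈ A, ∀ v, 0 ≤ Y a v)
    (hsum : ∀ a ∈ A, ∑ v, Y a v = Fintype.card β * μ a)
    (hdev : ∀ a ∈ A, ∀ v, |Y a v - μ a| ≤ B * (√(μ a) + 1)) :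
    Pr (fun f : α → β =>
        u * (B * (√(∑ a ∈ A, μ a) + 1)) < |∑ a ∈ A, Y a (f a) - ∑ a ∈ A, μ a|)
      ≤ 2 * exp (4 - u) := by
  have hβ : (0 : ℝ) < Fintype.card β := by exact_mod_cast Fintype.card_pos
  have hμ0 : ∀ a ∈ A, 0 ≤ μ a := fun a ha =>
    nonneg_of_mul_nonneg_right ((hsum a ha) ▸ sum_nonneg fun v _ => hY0 a ha v) hβ
  set M := B * (√(∑ a ∈ A, μ a) + 1) with hM
  have hMpos : 0 < M := by positivity
  set g : α → β → ℝ := fun a v => (Y a v - μ a) / M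
  have hmean : ∀ a ∈ A, ∑ v, g a v = 0 := fun a ha => by
    rw [← sum_div, sum_sub_distrib, hsum a ha, sum_const, card_univ, nsmul_eq_mul, sub_self,
      zero_div]
  have hbdd : ∀ a ∈ A, ∀ v, |g a v| ≤ 1 := fun a ha v => by
    rw [abs_div, abs_of_pos hMpos, div_le_one hMpos]
    refine (hdev a ha v).trans ?_
    have := sqrt_le_sqrt (single_le_sum hμ0 ha)
    rw [hM]
    gcongr
  have hV : ∑ a ∈ A, (∑ v, g a v ^ 2) / Fintype.card β ≤ 4 := by
    have hscale : B ^ 2 * ∑ a ∈ A, μ a ≤ M ^ 2 := by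
      have := sq_sqrt (sum_nonneg hμ0)
      rw [hM, mul_pow]
      gcongr
      nlinarith [sqrt_nonneg (∑ a ∈ A, μ a)]
    calc ∑ a ∈ A, (∑ v, g a v ^ 2) / Fintype.card β
        = (∑ a ∈ A, (∑ v, (Y a v - μ a) ^ 2) / Fintype.card β) / M ^ 2 := by
          simp only [g, div_pow, ← sum_div]
          ring
      _ ≤ (∑ a ∈ A, 4 * B ^ 2 * μ a) / M ^ 2 := by
          gcongr with a ha
          exact sum_sq_sub_div_card_le (Y a) hB (hY0 a ha) (hsum a ha) (hdev a ha)
      _ ≤ 4 := by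
          rw [div_le_iff₀ (by positivity), ← mul_sum, mul_assoc]
          linarith
  refine (Pr.mono fun f hf => ?_).trans (Pr.lt_abs_le_two_mul_exp_sub A g hmean hbdd hV)
  rwa [← sum_div, sum_sub_distrib, abs_div, abs_of_pos hMpos, lt_div_iff₀ hMpos]

end BoundedDeviations

section Tabulation

variable {A R : Type*} [AddCommGroup R] {c : ℕ}

noncomputable def binLoad (T : Fin c → A → R) (S : Finset (Fin c → A)) (b : R) : ℕ :=
  #(S.filter fun x => simpleTab T x = b)

lemma binLoad_eq_card_filter [DecidableEq R] (T : Fin c → A → R) (S : Finset (Fin c → A))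
    (b : R) : binLoad T S b = #(S.filter fun x => simpleTab T x = b) := by
  unfold binLoad
  congr

lemma sum_binLoad [Fintype R] (T : Fin c → A → R) (S : Finset (Fin c → A)) :
    ∑ b, binLoad T S b = #S :=
  (card_eq_sum_card_fiberwise fun x _ => mem_univ (simpleTab T x)).symm

lemma sum_binLoad_sub [Fintype R] (T : Fin c → A → R) (S : Finset (Fin c → A)) (b : R) :
    ∑ v, binLoad T S (b - v) = #S := by
  rw [← sum_binLoad T S]
  exact Fintype.sum_equiv (Equiv.subLeft b) _ _ fun v => by rw [Equiv.subLeft_apply]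

lemma simpleTab_cons (f : A → R) (w : Fin c → A → R) (x : Fin (c + 1) → A) :
    simpleTab (Fin.cons f w : Fin (c + 1) → A → R) x = f (x 0) + simpleTab w (Fin.tail x) :=
  Fin.sum_univ_succ _

noncomputable def heads (S : Finset (Fin (c + 1) → A)) : Finset A :=
  S.image (· 0)

noncomputable def tailsWithHead (S : Finset (Fin (c + 1) → A)) (a : A) : Finset (Fin c → A) :=
  (S.filter (· 0 = a)).image Fin.tail

lemma card_heads_le (S : Finset (Fin (c + 1) → A)) : #(heads S) ≤ #S :=
  card_image_le

lemma injOn_tail_of_head_eq (S : Finset (Fin (c + 1) → A)) (a : A) :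
    Set.InjOn Fin.tail (S.filter (· 0 = a) : Set (Fin (c + 1) → A)) := by
  intro x hx y hy hxy
  rw [← Fin.cons_self_tail x, ← Fin.cons_self_tail y, hxy, (mem_filter.mp hx).2,
    (mem_filter.mp hy).2]

lemma card_tailsWithHead (S : Finset (Fin (c + 1) → A)) (a : A) :
    #(tailsWithHead S a) = #(S.filter (· 0 = a)) :=
  card_image_of_injOn (injOn_tail_of_head_eq S a)

lemma card_tailsWithHead_le (S : Finset (Fin (c + 1) → A)) (a : A) :
    #(tailsWithHead S a) ≤ #S :=
  (card_tailsWithHead S a).trans_le (card_filter_le _ _)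

lemma sum_card_tailsWithHead (S : Finset (Fin (c + 1) → A)) :
    ∑ a ∈ heads S, #(tailsWithHead S a) = #S := by
  simp only [card_tailsWithHead]
  exact (card_eq_sum_card_fiberwise fun x hx => mem_image_of_mem _ hx).symm

lemma binLoad_cons (f : A → R) (w : Fin c → A → R) (S : Finset (Fin (c + 1) → A)) (b : R) :
    binLoad (Fin.cons f w : Fin (c + 1) → A → R) S b
      = ∑ a ∈ heads S, binLoad w (tailsWithHead S a) (b - f a) := by
  unfold binLoad
  rw [card_eq_sum_card_fiberwise fun x hx => mem_image_of_mem (· 0) (mem_filter.mp hx).1]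
  refine sum_congr rfl fun a _ => ?_
  rw [tailsWithHead, filter_image, card_image_of_injOn ((injOn_tail_of_head_eq S a).mono
    (coe_subset.mpr (filter_subset _ _))), filter_filter, filter_filter]
  refine congrArg card (filter_congr fun x _ => ?_)
  rw [simpleTab_cons, eq_sub_iff_add_eq']
  constructor
  · rintro ⟨hb, rfl⟩; exact ⟨rfl, hb⟩
  · rintro ⟨rfl, hb⟩; exact ⟨hb, rfl⟩

end Tabulation

section Balanced

open Real

variable {A R : Type*} [AddCommGroup R] [Fintype R] {c : ℕ}

def IsBalanced (T : Fin c → A → R) (S : Finset (Fin c → A)) (B : ℝ) : Prop :=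
  ∀ b, |(binLoad T S b : ℝ) - #S / Fintype.card R| ≤ B * (√(#S / Fintype.card R) + 1)

lemma abs_binLoad_sub_le_card (T : Fin c → A → R) (S : Finset (Fin c → A)) (b : R) :
    |(binLoad T S b : ℝ) - #S / Fintype.card R| ≤ #S := by
  have hload : (binLoad T S b : ℝ) ≤ #S := by exact_mod_cast card_filter_le _ _
  have hmean : (#S : ℝ) / Fintype.card R ≤ #S :=
    div_le_self (Nat.cast_nonneg _) (by exact_mod_cast Fintype.card_pos)
  rw [abs_le]
  constructor <;> linarith [(by positivity : (0 : ℝ) ≤ #S / Fintype.card R),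
    (Nat.cast_nonneg _ : (0 : ℝ) ≤ binLoad T S b)]

lemma isBalanced_one_of_card_le_one (T : Fin c → A → R) {S : Finset (Fin c → A)}
    (hS : #S ≤ 1) : IsBalanced T S 1 := fun b =>
  (abs_binLoad_sub_le_card T S b).trans (by
    rw [one_mul]
    exact (Nat.cast_le_one.mpr hS).trans (le_add_of_nonneg_left (sqrt_nonneg _)))

lemma abs_binLoad_sub_le_of_card_le_two (T : Fin c → A → R) (S : Finset (Fin c → A)) (b : R)
    (hR : Fintype.card R ≤ #S) (hS : #S ≤ 2) {C : ℝ} (hC : 2 / log 2 ^ c ≤ C) :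
    |(binLoad T S b : ℝ) - #S / Fintype.card R| ≤ C * √(#S / Fintype.card R) * log #S ^ c := by
  have hlog2 : 0 < log 2 ^ c := pow_pos (log_pos one_lt_two) c
  have hC0 : 0 ≤ C := (div_nonneg zero_le_two hlog2.le).trans hC
  rcases Nat.lt_or_ge (Fintype.card R) 2 with hR1 | hR2
  · have hR1' : Fintype.card R = 1 := le_antisymm (by omega) Fintype.card_pos
    have : Subsingleton R := Fintype.card_le_one_iff_subsingleton.mp hR1'.le
    have hload : binLoad T S b = #S := congrArg card (filter_true_of_mem fun x _ =>
      Subsingleton.elim _ _)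
    rw [hload, hR1', Nat.cast_one, div_one, sub_self, abs_zero]
    have := log_natCast_nonneg #S
    positivity
  · have hS2 : #S = 2 := by omega
    have hR2' : Fintype.card R = 2 := by omega
    rw [hS2, hR2', Nat.cast_ofNat, div_self two_ne_zero, sqrt_one, mul_one]
    calc |(binLoad T S b : ℝ) - 1| ≤ 2 := by
          simpa [hS2, hR2'] using abs_binLoad_sub_le_card T S b
      _ = 2 / log 2 ^ c * log 2 ^ c := (div_mul_cancel₀ _ hlog2.ne').symm
      _ ≤ C * log 2 ^ c := by gcongr

lemma Pr_not_forall_isBalanced_tailsWithHead_le [Fintype A] [DecidableEq A]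
    (S : Finset (Fin (c + 1) → A)) {B p : ℝ} (hp : 0 ≤ p)
    (h : ∀ a ∈ heads S, Pr (fun w : Fin c → A → R => ¬ IsBalanced w (tailsWithHead S a) B) ≤ p) :
    Pr (fun w : Fin c → A → R => ¬ ∀ a ∈ heads S, IsBalanced w (tailsWithHead S a) B)
      ≤ #S * p :=
  calc _ ≤ ∑ a ∈ heads S, Pr fun w : Fin c → A → R => ¬ IsBalanced w (tailsWithHead S a) B :=
        (Pr.mono fun w hw => by simpa using hw).trans (Pr.exists_le _ _)
    _ ≤ #(heads S) * p := by
        rw [← nsmul_eq_mul, ← sum_const]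
        exact sum_le_sum h
    _ ≤ #S * p := by gcongr; exact card_heads_le S

lemma Pr_not_isBalanced_cons_le [Fintype A] [DecidableEq A] (w : Fin c → A → R)
    (S : Finset (Fin (c + 1) → A)) {B u : ℝ} (hB : 1 ≤ B) (hw : ∀ a ∈ heads S, IsBalanced w (tailsWithHead S a) B) :
    Pr (fun f : A → R => ¬ IsBalanced (Fin.cons f w : Fin (c + 1) → A → R) S (u * B))
      ≤ Fintype.card R * (2 * exp (4 - u)) := by
  have hR : (Fintype.card R : ℝ) ≠ 0 := by exact_mod_cast Fintype.card_ne_zero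
  set μ : A → ℝ := fun a => #(tailsWithHead S a) / Fintype.card R
  have hμ : ∑ a ∈ heads S, μ a = #S / Fintype.card R := by
    rw [← sum_div]
    exact_mod_cast congrArg (fun n : ℕ => (n : ℝ) / Fintype.card R) (sum_card_tailsWithHead S)
  have hbin : ∀ b : R, Pr (fun f : A → R =>
      u * B * (√(#S / Fintype.card R) + 1)
        < |(binLoad (Fin.cons f w : Fin (c + 1) → A → R) S b : ℝ) - #S / Fintype.card R|)
        ≤ 2 * exp (4 - u) := by
    intro b
    have hsum : ∀ a ∈ heads S, ∑ v, (binLoad w (tailsWithHead S a) (b - v) : ℝ)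
        = Fintype.card R * μ a := fun a _ => by
      rw [mul_div_cancel₀ _ hR]
      exact_mod_cast sum_binLoad_sub w (tailsWithHead S a) b
    refine (Pr.mono fun f hf => ?_).trans (Pr.lt_abs_sum_sub_le (heads S)
      (fun a v => (binLoad w (tailsWithHead S a) (b - v) : ℝ)) μ hB
      (fun a _ v => Nat.cast_nonneg _) hsum (fun a ha v => hw a ha (b - v)))
    rw [binLoad_cons] at hf
    push_cast at hf
    rwa [hμ, ← mul_assoc]
  calc Pr (fun f : A → R => ¬ IsBalanced (Fin.cons f w : Fin (c + 1) → A → R) S (u * B))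
      ≤ Pr (fun f : A → R => ∃ b ∈ univ, u * B * (√(#S / Fintype.card R) + 1)
          < |(binLoad (Fin.cons f w : Fin (c + 1) → A → R) S b : ℝ) - #S / Fintype.card R|) :=
        Pr.mono fun f hf => by simpa [IsBalanced] using hf
    _ ≤ ∑ _b : R, 2 * exp (4 - u) := (Pr.exists_le _ _).trans (sum_le_sum fun b _ => hbin b)
    _ = Fintype.card R * (2 * exp (4 - u)) := by rw [sum_const, card_univ, nsmul_eq_mul]

end Balanced

section Numerics

open Real

lemma one_le_log_of_three_le {x : ℝ} (hx : 3 ≤ x) : 1 ≤ log x := by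
  rw [le_log_iff_exp_le (by linarith)]
  linarith [exp_one_lt_d9]

lemma rpow_neg_add_one_add_mul_exp_le {N m γ : ℝ} (hN : 3 ≤ N) (hm : m ≤ N) :
    N ^ (-(γ + 1)) + m * (2 * exp (4 - (γ + 7) * log N)) ≤ N ^ (-γ) := by
  have hN0 : 0 < N := by linarith
  have hL := one_le_log_of_three_le hN
  set E := exp (-γ * log N)
  set t := exp (-log N)
  have hE : 0 < E := exp_pos _
  have ht : t = N⁻¹ := by simp only [t, exp_neg, exp_log hN0]
  have ht3 : t ≤ 1 / 3 := by rw [ht, one_div]; exact inv_anti₀ (by norm_num) hN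
  have hmt : m * t ≤ 1 := by rw [ht, ← div_eq_mul_inv, div_le_one hN0]; exact hm
  have hfirst : N ^ (-(γ + 1)) = E * t := by
    rw [rpow_def_of_pos hN0, ← exp_add]; ring_nf
  have hsecond : exp (4 - (γ + 7) * log N) ≤ E * t ^ 3 := by
    rw [← exp_nat_mul (-log N), ← exp_add]
    gcongr
    push_cast
    nlinarith
  have hlast : N ^ (-γ) = E := by rw [rpow_def_of_pos hN0, mul_neg, mul_comm, ← neg_mul]
  rw [hfirst, hlast]
  have ht0 : 0 < t := exp_pos _
  have hm_second : m * exp (4 - (γ + 7) * log N) ≤ E * t ^ 2 := by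
    rcases le_or_gt m 0 with hm0 | hm0
    · nlinarith [exp_pos (4 - (γ + 7) * log N), sq_nonneg t]
    · calc m * exp (4 - (γ + 7) * log N) ≤ m * (E * t ^ 3) := by gcongr
        _ = E * t ^ 2 * (m * t) := by ring
        _ ≤ E * t ^ 2 := mul_le_of_le_one_right (by positivity) hmt
  nlinarith [mul_le_mul_of_nonneg_left ht3 hE.le, mul_le_mul_of_nonneg_left ht3 (mul_pos hE ht0).le]

end Numerics

section Induction

open Real

theorem exists_one_sub_rpow_le_Pr_isBalanced (c : ℕ) {γ : ℝ} (hγ : 0 < γ) :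
    ∃ C : ℝ, 1 ≤ C ∧
      ∀ (A : Type*) (R : Type*) [Fintype A] [DecidableEq A] [AddCommGroup R] [Fintype R]
      (S : Finset (Fin c → A)) (N : ℕ), #S ≤ N → Fintype.card R ≤ N → 3 ≤ N →
      1 - (N : ℝ) ^ (-γ) ≤ Pr fun T : Fin c → A → R => IsBalanced T S (C * log N ^ c) := by
  induction c generalizing γ with
  | zero =>
    refine ⟨1, le_rfl, fun A R _ _ _ _ S N _ _ _ => ?_⟩
    have hS : #S ≤ 1 := (card_le_univ S).trans (by simp)
    rw [Pr.eq_one fun T => by simpa using isBalanced_one_of_card_le_one T hS]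
    linarith [rpow_nonneg (Nat.cast_nonneg N) (-γ)]
  | succ c ih =>
    obtain ⟨C, hC, hIH⟩ := ih (γ := γ + 2) (by linarith)
    refine ⟨C * (γ + 7), by nlinarith, fun A R _ _ _ _ S N hS hR hN => ?_⟩
    have hN3 : (3 : ℝ) ≤ N := by exact_mod_cast hN
    have hN0 : (0 : ℝ) < N := by linarith
    set L := log N
    set B := C * L ^ c
    have hB : 1 ≤ B :=
      one_le_mul_of_one_le_of_one_le hC (one_le_pow₀ (one_le_log_of_three_le hN3))
    set G : (Fin c → A → R) → Prop := fun w => ∀ a ∈ heads S, IsBalanced w (tailsWithHead S a) B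
    have hgood : Pr (fun w => ¬ G w) ≤ (N : ℝ) ^ (-(γ + 1)) :=
      calc _ ≤ #S * (N : ℝ) ^ (-(γ + 2)) :=
            Pr_not_forall_isBalanced_tailsWithHead_le S (by positivity) fun a _ => by
              rw [Pr.not]
              linarith [hIH A R (tailsWithHead S a) N ((card_tailsWithHead_le S a).trans hS) hR hN]
        _ ≤ N * (N : ℝ) ^ (-(γ + 2)) := by gcongr
        _ = (N : ℝ) ^ (-(γ + 1)) := by
            rw [← rpow_one_add' hN0.le (by linarith)]
            ring_nf
    have hbad := Pr.le_add_of_fin_cons G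
      (fun T : Fin (c + 1) → A → R => ¬ IsBalanced T S ((γ + 7) * L * B))
      (q := Fintype.card R * (2 * exp (4 - (γ + 7) * L))) (by positivity) hgood
      fun w hw => Pr_not_isBalanced_cons_le w S hB hw
    have hbound := rpow_neg_add_one_add_mul_exp_le (γ := γ) hN3
      (show (Fintype.card R : ℝ) ≤ N by exact_mod_cast hR)
    rw [Pr.not] at hbad
    have hconst : C * (γ + 7) * L ^ (c + 1) = (γ + 7) * L * B := by ring
    rw [hconst]
    linarith

end Induction

theorem simple_tabulation_all_bins_general (c : ℕ) (γ : ℝ) (hγ : 0 < γ) :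
    ∃ C : ℝ,
      ∀ (s r : ℕ) (S : Finset (Fin c → Bits s)),
        2 ^ r ≤ S.card →
        1 - (S.card : ℝ) ^ (-γ) ≤
          Pr (fun T : Fin c → Bits s → Bits r =>
            ∀ b : Bits r,
              |((S.filter fun x => simpleTab T x = b).card : ℝ) -
                  (S.card : ℝ) / (2 : ℝ) ^ r| ≤
                C * Real.sqrt ((S.card : ℝ) / (2 : ℝ) ^ r) * Real.log (S.card) ^ c) := by
  obtain ⟨C, hC, hbal⟩ := exists_one_sub_rpow_le_Pr_isBalanced c hγ
  refine ⟨max (2 * C) (2 / Real.log 2 ^ c), fun s r S hm => ?_⟩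
  have hbits : Fintype.card (Bits r) = 2 ^ r := by simp
  have hbits' : (2 : ℝ) ^ r = Fintype.card (Bits r) := by rw [hbits]; push_cast; rfl
  rw [← hbits] at hm
  rw [hbits']
  simp only [← binLoad_eq_card_filter]
  rcases Nat.lt_or_ge #S 3 with hsmall | hlarge
  · have hS2 : #S ≤ 2 := by omega
    refine le_trans ?_ (Pr.eq_one fun T b =>
      abs_binLoad_sub_le_of_card_le_two T S b hm hS2 (le_max_right _ _)).ge
    linarith [Real.rpow_nonneg (Nat.cast_nonneg #S) (-γ)]
  · refine (hbal (Bits s) (Bits r) S #S le_rfl hm hlarge).trans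
      (Pr.mono fun T hT b => (hT b).trans ?_)
    have hroot : 1 ≤ √(#S / Fintype.card (Bits r) : ℝ) := Real.one_le_sqrt.mpr
      ((one_le_div (by exact_mod_cast Fintype.card_pos)).mpr (by exact_mod_cast hm))
    have hlog : 0 ≤ Real.log #S ^ c := pow_nonneg (Real.log_natCast_nonneg _) c
    calc C * Real.log #S ^ c * (√(#S / Fintype.card (Bits r) : ℝ) + 1)
        ≤ C * Real.log #S ^ c * (2 * √(#S / Fintype.card (Bits r) : ℝ)) := by
          gcongr; linarith
      _ = 2 * C * √(#S / Fintype.card (Bits r) : ℝ) * Real.log #S ^ c := by ring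
      _ ≤ _ := by gcongr; exact le_max_left _ _

/-- All-bins concentration for simple tabulation with few bins
(Theorem 1, equation (6)): for constants `c ≥ 1`, `γ > 0` there is a constant `C` such
that when `n ≥ m` keys `S` are hashed into `m = 2^r` bins by random simple tabulation,
then with probability at least `1 − n^{−γ}` every bin `b` receives
`n/m ± C·√(n/m)·(log n)^c` keys. -/
theorem simple_tabulation_all_bins (c : ℕ) (hc : 1 ≤ c) (γ : ℝ) (hγ : 0 < γ) :
    ∃ C : ℝ,
      ∀ (s r : ℕ) (S : Finset (Fin c → Bits s)),
        2 ^ r ≤ S.card →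
        1 - (S.card : ℝ) ^ (-γ) ≤
          Pr (fun T : Fin c → Bits s → Bits r =>
            ∀ b : Bits r,
              |((S.filter fun x => simpleTab T x = b).card : ℝ) -
                  (S.card : ℝ) / (2 : ℝ) ^ r| ≤
                C * Real.sqrt ((S.card : ℝ) / (2 : ℝ) ^ r) * Real.log (S.card) ^ c) :=
  simple_tabulation_all_bins_general c γ hγ
end

section
/- Twisted tabulation is 3-independent: if h : Σ^c → [2^r] is a random twisted tabulation hash function (c ≥ 2), then for any three distinct keys x, y, z ∈ Σ^c the hash values h(x), h(y), h(z) are mutually independent random variables, and for every key x the value h(x) is uniformly distributed in [2^r]. -/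
open scoped Classical
open Finset

/-- Twisted tabulation hashing with `c = k + 1` characters: a key is a head
`x.1 ∈ Σ` together with a tail `x.2 ∈ Σ^k`.  The tables are
`ω.1 i : Σ → Σ × R` (for the tail positions, each entry carrying a twister
character) and `ω.2 : Σ → R` (for the head).  One computes
`(t, h_{>0}) = ⊕_{i} ω.1 i (x.2 i)` and outputs `h_{>0} ⊕ ω.2 (x.1 ⊕ t)`. -/
def twistedTab {s k : ℕ} {R : Type*} [AddCommMonoid R]
    (ω : (Fin k → Bits s → Bits s × R) × (Bits s → R))
    (x : Bits s × (Fin k → Bits s)) : R :=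
  let p := ∑ i, ω.1 i (x.2 i)
  p.2 + ω.2 (x.1 + p.1)

/-! Fix the twister tables `t`. Then `h` is simple tabulation applied to the twisted keys
`(x₀ + τ(x₁, …), x₁, …)`, the twisting is injective, and the hash tables are independent of `t`.
Simple tabulation is additive in the tables, and for three distinct keys some position carries
a character held by exactly one of them, so a point table there moves that key's hash value
alone: the map from tables to the triple of hash values is surjective. The fibres of a
surjective homomorphism of finite groups have equal size, so the triple is uniform on `R³`
given every `t`, hence unconditionally. -/

lemma Pr_comp_equiv {Ω Ω' : Type*} [Fintype Ω] [Fintype Ω'] (e : Ω ≃ Ω') (E : Ω' → Prop) :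
    Pr (fun ω => E (e ω)) = Pr E := by
  rw [Pr, Pr, Fintype.card_congr e, card_equiv (t := {ω' | E ω'}) e (fun _ => by simp)]

lemma Pr_prod_of_forall {α β : Type*} [Fintype α] [Fintype β] [Nonempty α]
    (E : α × β → Prop) (p : ℝ) (h : ∀ a, Pr (fun b => E (a, b)) = p) : Pr E = p := by
  have hcard : #{ω | E ω} = ∑ a, #{b | E (a, b)} := by
    simp only [card_filter, Fintype.sum_prod_type]
  calc Pr E = ∑ a : α, Pr (fun b => E (a, b)) / Fintype.card α := by
        simp only [Pr, hcard, Fintype.card_prod, Nat.cast_sum, Nat.cast_mul, sum_div, div_div,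
          mul_comm]
    _ = p := by
        simp only [h, sum_const, card_univ, nsmul_eq_mul]
        field_simp

lemma AddMonoidHom.card_fiber_mul_card_of_surjective {V W : Type*} [AddGroup V] [AddGroup W]
    [Fintype V] [Fintype W] (f : V →+ W) (hf : Function.Surjective f) (w : W) :
    #{v | f v = w} * Fintype.card W = Fintype.card V := by
  have hfiber : #{v | f v = w} = Nat.card f.ker := by
    rw [← Nat.card_congr (f.fiberEquivKerOfSurjective hf w), ← Fintype.card_subtype,
      ← Nat.card_eq_fintype_card]
    rfl
  rw [hfiber, ← Nat.card_eq_fintype_card, ← Nat.card_eq_fintype_card, ← f.ker.card_mul_index,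
    AddSubgroup.index_ker, AddMonoidHom.range_eq_top.mpr hf, AddSubgroup.card_top]

lemma AddMonoidHom.Pr_eq_of_surjective {V W : Type*} [AddGroup V] [AddGroup W]
    [Fintype V] [Fintype W] (f : V →+ W) (hf : Function.Surjective f) (w : W) :
    Pr (fun v => f v = w) = 1 / Fintype.card W := by
  have h := f.card_fiber_mul_card_of_surjective hf w
  have hfiber : #{v | f v = w} ≠ 0 := left_ne_zero_of_mul (h ▸ Fintype.card_ne_zero)
  rw [Pr, ← h, Nat.cast_mul]
  field_simp

lemma Pr_eq_one_div_card_of_surjective_slices {Ω T V W : Type*} [Fintype Ω] [Fintype T]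
    [Nonempty T] [AddGroup V] [Fintype V] [AddGroup W] [Fintype W] (e : Ω ≃ T × V) (g : Ω → W)
    (φ : T → V →+ W) (hg : ∀ t v, g (e.symm (t, v)) = φ t v)
    (hφ : ∀ t, Function.Surjective (φ t)) (w : W) :
    Pr (fun ω => g ω = w) = 1 / Fintype.card W := by
  rw [← Pr_comp_equiv e.symm]
  refine Pr_prod_of_forall _ _ fun t => ?_
  simp only [hg]
  exact (φ t).Pr_eq_of_surjective (hφ t) w

namespace TwistedTabulation

variable {α R : Type*} {k : ℕ}

def simpleTab [AddCommMonoid R] (κ : α × (Fin k → α)) : (Fin k → α → R) × (α → R) →+ R where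
  toFun v := (∑ i, v.1 i (κ.2 i)) + v.2 κ.1
  map_zero' := by simp
  map_add' p q := by
    simp only [Prod.fst_add, Prod.snd_add, Pi.add_apply, sum_add_distrib]
    abel

def keyChar (κ : α × (Fin k → α)) : Option (Fin k) → α
  | none => κ.1
  | some i => κ.2 i

lemma exists_keyChar_ne {u v : α × (Fin k → α)} (h : u ≠ v) :
    ∃ pos, keyChar u pos ≠ keyChar v pos := by
  by_contra! hc
  exact h (Prod.ext (hc none) (funext fun i => hc (some i)))

noncomputable def pointTable [AddCommMonoid R] :
    Option (Fin k) → α → R → (Fin k → α → R) × (α → R)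
  | none, c, δ => (0, Pi.single c δ)
  | some j, c, δ => (Pi.single j (Pi.single c δ), 0)

lemma simpleTab_pointTable [AddCommMonoid R] (κ : α × (Fin k → α)) (pos : Option (Fin k))
    (c : α) (δ : R) :
    simpleTab κ (pointTable pos c δ) = (Pi.single c δ : α → R) (keyChar κ pos) := by
  cases pos with
  | none => simp [simpleTab, pointTable, keyChar]
  | some j =>
    simp only [simpleTab, pointTable, keyChar, AddMonoidHom.coe_mk, ZeroHom.coe_mk,
      Pi.zero_apply, add_zero]
    rw [Fintype.sum_eq_single j fun i hi => by simp [hi]]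
    simp

lemma simpleTab_const [AddCommMonoid R] (κ : α × (Fin k → α)) (a : R) :
    simpleTab κ ((0, fun _ => a) : (Fin k → α → R) × (α → R)) = a := by
  simp [simpleTab]

lemma simpleTab_surjective [AddCommMonoid R] (κ : α × (Fin k → α)) :
    Function.Surjective (simpleTab (R := R) κ) :=
  fun a => ⟨_, simpleTab_const κ a⟩

lemma exists_simpleTab_update [AddCommGroup R] (p : (Fin k → α → R) × (α → R))
    (w : α × (Fin k → α)) (pos : Option (Fin k)) (d : R) :
    ∃ p', simpleTab w p' = d ∧
      ∀ κ, keyChar κ pos ≠ keyChar w pos → simpleTab κ p' = simpleTab κ p := by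
  refine ⟨p + pointTable pos (keyChar w pos) (d - simpleTab w p), ?_, fun κ hκ => ?_⟩
  · simp [simpleTab_pointTable]
  · simp [simpleTab_pointTable, hκ]

lemma exists_simpleTab_eq_pair [AddCommGroup R] {u v : α × (Fin k → α)} (huv : u ≠ v)
    (a b : R) : ∃ p, simpleTab u p = a ∧ simpleTab v p = b := by
  obtain ⟨pos, hpos⟩ := exists_keyChar_ne huv
  obtain ⟨p, hv, hu⟩ := exists_simpleTab_update (0, fun _ => a) v pos b
  exact ⟨p, (hu u hpos).trans (simpleTab_const u a), hv⟩

lemma exists_simpleTab_eq_triple_of_unique [AddCommGroup R] {u v w : α × (Fin k → α)}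
    (huv : u ≠ v) {pos : Option (Fin k)} (hu : keyChar u pos ≠ keyChar w pos)
    (hv : keyChar v pos ≠ keyChar w pos) (a b d : R) :
    ∃ p, simpleTab u p = a ∧ simpleTab v p = b ∧ simpleTab w p = d := by
  obtain ⟨p, hpu, hpv⟩ := exists_simpleTab_eq_pair huv a b
  obtain ⟨p', hw, hp'⟩ := exists_simpleTab_update p w pos d
  exact ⟨p', (hp' u hu).trans hpu, (hp' v hv).trans hpv, hw⟩

def tripleTab [AddCommMonoid R] (x y z : α × (Fin k → α)) :
    (Fin k → α → R) × (α → R) →+ R × R × R :=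
  (simpleTab x).prod ((simpleTab y).prod (simpleTab z))

lemma tripleTab_surjective [AddCommGroup R] {x y z : α × (Fin k → α)} (hxy : x ≠ y)
    (hxz : x ≠ z) (hyz : y ≠ z) : Function.Surjective (tripleTab (R := R) x y z) := by
  rintro ⟨a, b, d⟩
  simp only [tripleTab, AddMonoidHom.prod_apply, Prod.mk.injEq]
  -- of three distinct keys, one has a character at some position that the other two lack
  obtain ⟨pos, hpos⟩ := exists_keyChar_ne hxy
  by_cases hzx : keyChar z pos = keyChar x pos
  · obtain ⟨p, hx, hz, hy⟩ :=
      exists_simpleTab_eq_triple_of_unique hxz hpos (hzx ▸ hpos) a d b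
    exact ⟨p, hx, hy, hz⟩
  by_cases hzy : keyChar z pos = keyChar y pos
  · obtain ⟨p, hy, hz, hx⟩ :=
      exists_simpleTab_eq_triple_of_unique hyz (Ne.symm hpos) (hzy ▸ Ne.symm hpos) b d a
    exact ⟨p, hx, hy, hz⟩
  exact exists_simpleTab_eq_triple_of_unique hxy (Ne.symm hzx) (Ne.symm hzy) a b d

def twist [AddCommMonoid α] (t : Fin k → α → α) (κ : α × (Fin k → α)) : α × (Fin k → α) :=
  (κ.1 + ∑ i, t i (κ.2 i), κ.2)

lemma twist_injective [AddCommGroup α] (t : Fin k → α → α) : Function.Injective (twist t) := by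
  rintro ⟨u₁, u₂⟩ ⟨v₁, v₂⟩ h
  simp only [twist, Prod.mk.injEq] at h
  obtain ⟨h₁, rfl⟩ := h
  exact Prod.ext (add_right_cancel h₁) rfl

def tablesEquiv {s : ℕ} :
    (Fin k → Bits s → Bits s × R) × (Bits s → R) ≃
      (Fin k → Bits s → Bits s) × ((Fin k → Bits s → R) × (Bits s → R)) where
  toFun ω := (fun i u => (ω.1 i u).1, fun i u => (ω.1 i u).2, ω.2)
  invFun p := (fun i u => (p.1 i u, p.2.1 i u), p.2.2)

lemma twistedTab_tablesEquiv_symm [AddCommMonoid R] {s : ℕ} (t : Fin k → Bits s → Bits s)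
    (v : (Fin k → Bits s → R) × (Bits s → R)) (κ : Bits s × (Fin k → Bits s)) :
    twistedTab (tablesEquiv.symm (t, v)) κ = simpleTab (twist t κ) v := by
  simp [twistedTab, tablesEquiv, simpleTab, twist, Prod.fst_sum, Prod.snd_sum]

lemma Pr_twistedTab_eq [AddCommGroup R] [Fintype R] {s : ℕ} (w : Bits s × (Fin k → Bits s))
    (v : R) : Pr (fun ω : (Fin k → Bits s → Bits s × R) × (Bits s → R) => twistedTab ω w = v) =
      1 / Fintype.card R :=
  Pr_eq_one_div_card_of_surjective_slices tablesEquiv (twistedTab · w)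
    (fun t => simpleTab (twist t w)) (fun t v => twistedTab_tablesEquiv_symm t v w)
    (fun _ => simpleTab_surjective _) v

lemma Pr_twistedTab_eq_triple [AddCommGroup R] [Fintype R] {s : ℕ}
    {x y z : Bits s × (Fin k → Bits s)} (hxy : x ≠ y) (hxz : x ≠ z) (hyz : y ≠ z) (a b d : R) :
    Pr (fun ω : (Fin k → Bits s → Bits s × R) × (Bits s → R) =>
        twistedTab ω x = a ∧ twistedTab ω y = b ∧ twistedTab ω z = d) =
      1 / Fintype.card R ^ 3 := by
  have h := Pr_eq_one_div_card_of_surjective_slices tablesEquiv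
    (fun ω => (twistedTab ω x, twistedTab ω y, twistedTab ω z))
    (fun t => tripleTab (twist t x) (twist t y) (twist t z))
    (fun t v => by simp [tripleTab, twistedTab_tablesEquiv_symm])
    (fun t => tripleTab_surjective ((twist_injective t).ne hxy) ((twist_injective t).ne hxz)
      ((twist_injective t).ne hyz)) (a, b, d)
  simp only [Prod.mk.injEq, Fintype.card_prod] at h
  rw [h]
  push_cast
  ring

end TwistedTabulation

theorem twisted_tabulation_three_independent_general
    (s k r : ℕ)
    (x y z : Bits s × (Fin k → Bits s)) (hxy : x ≠ y) (hxz : x ≠ z) (hyz : y ≠ z)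
    (a b d : Bits r) :
    (∀ (w : Bits s × (Fin k → Bits s)) (v : Bits r),
        Pr (fun ω : (Fin k → Bits s → Bits s × Bits r) × (Bits s → Bits r) =>
          twistedTab ω w = v) = 1 / 2 ^ r) ∧
    Pr (fun ω : (Fin k → Bits s → Bits s × Bits r) × (Bits s → Bits r) =>
        twistedTab ω x = a ∧ twistedTab ω y = b ∧ twistedTab ω z = d) =
      Pr (fun ω : (Fin k → Bits s → Bits s × Bits r) × (Bits s → Bits r) =>
          twistedTab ω x = a) *
        Pr (fun ω : (Fin k → Bits s → Bits s × Bits r) × (Bits s → Bits r) =>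
          twistedTab ω y = b) *
        Pr (fun ω : (Fin k → Bits s → Bits s × Bits r) × (Bits s → Bits r) =>
          twistedTab ω z = d) := by
  have hcard : (Fintype.card (Bits r) : ℝ) = 2 ^ r := by simp
  refine ⟨fun w v => by rw [TwistedTabulation.Pr_twistedTab_eq, hcard], ?_⟩
  rw [TwistedTabulation.Pr_twistedTab_eq_triple hxy hxz hyz, TwistedTabulation.Pr_twistedTab_eq,
    TwistedTabulation.Pr_twistedTab_eq, TwistedTabulation.Pr_twistedTab_eq, hcard]
  ring

/-- Twisted tabulation is 3-independent: picking all tables uniformly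
at random, every hash value `h(x)` is uniform in `[2^r]`, and for any three distinct
keys the joint distribution of their hash values factors, i.e. the three hash values
are mutually independent. -/
theorem twisted_tabulation_three_independent
    (s k r : ℕ) (hk : 1 ≤ k)
    (x y z : Bits s × (Fin k → Bits s)) (hxy : x ≠ y) (hxz : x ≠ z) (hyz : y ≠ z)
    (a b d : Bits r) :
    (∀ (w : Bits s × (Fin k → Bits s)) (v : Bits r),
        Pr (fun ω : (Fin k → Bits s → Bits s × Bits r) × (Bits s → Bits r) =>
          twistedTab ω w = v) = 1 / 2 ^ r) ∧
    Pr (fun ω : (Fin k → Bits s → Bits s × Bits r) × (Bits s → Bits r) =>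
        twistedTab ω x = a ∧ twistedTab ω y = b ∧ twistedTab ω z = d) =
      Pr (fun ω : (Fin k → Bits s → Bits s × Bits r) × (Bits s → Bits r) =>
          twistedTab ω x = a) *
        Pr (fun ω : (Fin k → Bits s → Bits s × Bits r) × (Bits s → Bits r) =>
          twistedTab ω y = b) *
        Pr (fun ω : (Fin k → Bits s → Bits s × Bits r) × (Bits s → Bits r) =>
          twistedTab ω z = d) :=
  twisted_tabulation_three_independent_general s k r x y z hxy hxz hyz a b d
end

section
/- Minwise collision probability for set similarity: let h be a random function from a finite set U to a linearly ordered set, and let A, B ⊆ U be finite nonempty subsets. If almost surely h is injective on A ∪ B, then Pr[min_{x∈A} h(x) = min_{y∈B} h(y)] = Σ_{x ∈ A∩B} Pr[h(x) = min_{z ∈ A∪B} h(z)]. -/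
open scoped Classical
open Finset

private lemma minwise_key {U L : Type*} [LinearOrder L] [DecidableEq U]
    (g : U → L) (A B : Finset U) (hA : A.Nonempty) (hB : B.Nonempty)
    (hg : Set.InjOn g ((A ∪ B : Finset U) : Set U)) (c : ℝ) :
    (if (A.image g).min = (B.image g).min then c else 0) =
      ∑ x ∈ A ∩ B, if ((A ∪ B).image g).min = (g x : WithTop L) then c else 0 := by
  have hAne : (A.image g).Nonempty := hA.image g
  have hBne : (B.image g).Nonempty := hB.image g
  have hUne : ((A ∪ B).image g).Nonempty := (hA.mono Finset.subset_union_left).image g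
  obtain ⟨a, haA, hga⟩ := Finset.mem_image.mp (Finset.min'_mem (A.image g) hAne)
  obtain ⟨b, hbB, hgb⟩ := Finset.mem_image.mp (Finset.min'_mem (B.image g) hBne)
  have hUeq : (A ∪ B).image g = A.image g ∪ B.image g := Finset.image_union ..
  have hmUle : ∀ x ∈ A ∪ B, ((A ∪ B).image g).min' hUne ≤ g x := fun x hx =>
    Finset.min'_le _ _ (Finset.mem_image_of_mem g hx)
  rw [← Finset.coe_min' hAne, ← Finset.coe_min' hBne, ← Finset.coe_min' hUne]
  simp only [WithTop.coe_eq_coe]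
  by_cases heq : (A.image g).min' hAne = (B.image g).min' hBne
  · have hab : a = b := by
      apply hg (by simp [haA]) (by simp [hbB])
      rw [hga, hgb, heq]
    have haB : a ∈ B := hab ▸ hbB
    have hmUa : ((A ∪ B).image g).min' hUne = g a := by
      apply le_antisymm (hmUle a (by simp [haA]))
      rw [hga]
      obtain ⟨u, huAB, hgu⟩ := Finset.mem_image.mp (Finset.min'_mem _ hUne)
      rcases Finset.mem_union.mp huAB with hu | hu
      · exact hgu ▸ Finset.min'_le _ _ (Finset.mem_image_of_mem g hu)
      · rw [heq]; exact hgu ▸ Finset.min'_le _ _ (Finset.mem_image_of_mem g hu)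
    have hfilt : (A ∩ B).filter (fun x => ((A ∪ B).image g).min' hUne = g x) = {a} := by
      ext x
      simp only [Finset.mem_filter, Finset.mem_inter, Finset.mem_singleton]
      constructor
      · rintro ⟨⟨hxA, _⟩, hx⟩
        exact hg (by simp [hxA]) (by simp [haA]) (by rw [← hx, hmUa])
      · rintro rfl
        exact ⟨⟨haA, haB⟩, hmUa⟩
    rw [if_pos heq, ← Finset.sum_filter, hfilt, Finset.sum_singleton]
  · have hfilt : (A ∩ B).filter (fun x => ((A ∪ B).image g).min' hUne = g x) = ∅ := by
      ext x
      simp only [Finset.mem_filter, Finset.mem_inter, Finset.notMem_empty, iff_false,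
        not_and]
      rintro ⟨hxA, hxB⟩ hx
      have h1 : (A.image g).min' hAne = ((A ∪ B).image g).min' hUne :=
        le_antisymm (hx ▸ Finset.min'_le _ _ (Finset.mem_image_of_mem g hxA))
          (hga ▸ hmUle a (by simp [haA]))
      have h2 : (B.image g).min' hBne = ((A ∪ B).image g).min' hUne :=
        le_antisymm (hx ▸ Finset.min'_le _ _ (Finset.mem_image_of_mem g hxB))
          (hgb ▸ hmUle b (by simp [hbB]))
      exact heq (h1.trans h2.symm)
    rw [if_neg heq, ← Finset.sum_filter, hfilt, Finset.sum_empty]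

/-- Minwise collision probability for set similarity: let `h` be a
random function (defined on a finite probability space `Ω` with weights `p`) from a
finite set `U` to a linearly ordered set `L`, and let `A, B ⊆ U` be finite nonempty
subsets.  If `h` is almost surely injective on `A ∪ B`, then
`Pr[min h(A) = min h(B)] = Σ_{x ∈ A ∩ B} Pr[h(x) = min h(A ∪ B)]`.
(`Finset.min` takes values in `WithTop L`; on nonempty sets it is the usual minimum.) -/
theorem minwise_collision_probability
    {Ω U L : Type*} [Fintype Ω] [Fintype U] [LinearOrder L]
    (p : Ω → ℝ) (hp : ∀ ω, 0 ≤ p ω) (hsum : ∑ ω, p ω = 1)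
    (h : Ω → U → L) (A B : Finset U) (hA : A.Nonempty) (hB : B.Nonempty)
    (hinj : ∑ ω ∈ Finset.univ.filter
        (fun ω => ¬ Set.InjOn (h ω) ((A ∪ B : Finset U) : Set U)), p ω = 0) :
    ∑ ω ∈ Finset.univ.filter
        (fun ω => (A.image (h ω)).min = (B.image (h ω)).min), p ω =
      ∑ x ∈ A ∩ B,
        ∑ ω ∈ Finset.univ.filter
          (fun ω => ((A ∪ B).image (h ω)).min = (h ω x : WithTop L)), p ω := by
  classical
  have hpz : ∀ ω, ¬ Set.InjOn (h ω) ((A ∪ B : Finset U) : Set U) → p ω = 0 := by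
    intro ω hω
    exact (Finset.sum_eq_zero_iff_of_nonneg (fun ω _ => hp ω)).mp hinj ω
      (Finset.mem_filter.mpr ⟨Finset.mem_univ ω, hω⟩)
  simp only [Finset.sum_filter]
  rw [Finset.sum_comm]
  refine Finset.sum_congr rfl fun ω _ => ?_
  by_cases hgood : Set.InjOn (h ω) ((A ∪ B : Finset U) : Set U)
  · exact minwise_key (h ω) A B hA hB hgood (p ω)
  · simp [hpz ω hgood]
end
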